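/- arXiv:1711.01877 — 7 statements merged into one kernel-verified Lean document; each statement's English description precedes it below -/
import Mathlib

section
/- Let K > 0 and a ∈ ℝ, define f(x) = (x − a)·exp(−K·(2^x − 1)), and let x* > a satisfy (ln 2)·K·2^{x*}·(x* − a) = 1. Then for every x > a with x ≠ x*, f(x) < f(x*); that is, f attains its strict global maximum on (a, ∞) at x*. -/
/-!
Write `(x - a) * exp (-K * (2 ^ x - 1)) = exp (g x)` with `g x = log (x - a) - K * (2 ^ x - 1)`.
On `(a, ∞)` the derivative `g' x = (x - a)⁻¹ - K * log 2 * 2 ^ x` is strictly decreasing, and the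
stationarity condition says exactly that it vanishes at `x*`. So `g` strictly increases up to `x*`
and strictly decreases after it, and `exp` preserves the strict maximum.
-/

open Real Set

theorem lt_of_hasDerivAt_of_strictAntiOn_deriv {g g' : ℝ → ℝ} {a c : ℝ} (hac : a < c)
    (hg : ∀ x ∈ Ioi a, HasDerivAt g (g' x) x) (hg' : StrictAntiOn g' (Ioi a)) (hc : g' c = 0)
    {x : ℝ} (hax : a < x) (hxc : x ≠ c) : g x < g c := by
  have hcont : ∀ D ⊆ Ioi a, ContinuousOn g D := fun D hD y hy =>
    (hg y (hD hy)).continuousAt.continuousWithinAt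
  rcases hxc.lt_or_gt with hlt | hgt
  · have hmono : StrictMonoOn g (Ioc a c) := by
      refine strictMonoOn_of_deriv_pos (convex_Ioc a c) (hcont _ Ioc_subset_Ioi_self) ?_
      rw [interior_Ioc]
      rintro y ⟨hay, hyc⟩
      rw [(hg y hay).deriv, ← hc]
      exact hg' hay hac hyc
    exact hmono ⟨hax, hlt.le⟩ ⟨hac, le_rfl⟩ hlt
  · have hanti : StrictAntiOn g (Ici c) := by
      refine strictAntiOn_of_deriv_neg (convex_Ici c)
        (hcont _ fun y hy => hac.trans_le hy) ?_
      intro y hy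
      rw [interior_Ici] at hy
      rw [(hg y (hac.trans hy)).deriv, ← hc]
      exact hg' hac (hac.trans hy) hy
    exact hanti self_mem_Ici hgt.le hgt

theorem hasDerivAt_log_sub_sub_mul_two_rpow (K a : ℝ) {x : ℝ} (hx : a < x) :
    HasDerivAt (fun x => log (x - a) - K * ((2 : ℝ) ^ x - 1))
      ((x - a)⁻¹ - K * log 2 * (2 : ℝ) ^ x) x := by
  have hlog : HasDerivAt (fun x => log (x - a)) (x - a)⁻¹ x := by
    simpa using ((hasDerivAt_id x).sub_const a).log (sub_pos.mpr hx).ne'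
  have hpow : HasDerivAt (fun x : ℝ => (2 : ℝ) ^ x) ((2 : ℝ) ^ x * log 2) x :=
    (hasStrictDerivAt_const_rpow two_pos x).hasDerivAt
  exact (hlog.sub ((hpow.sub_const 1).const_mul K)).congr_deriv (by ring)

theorem strictAntiOn_inv_sub_sub_mul_two_rpow {K : ℝ} (hK : 0 < K) (a : ℝ) :
    StrictAntiOn (fun x => (x - a)⁻¹ - K * log 2 * (2 : ℝ) ^ x) (Ioi a) := by
  intro x hx y hy hxy
  have hinv : (y - a)⁻¹ < (x - a)⁻¹ :=
    (inv_lt_inv₀ (sub_pos.mpr hy) (sub_pos.mpr hx)).mpr (by linarith)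
  have hpow : (2 : ℝ) ^ x < (2 : ℝ) ^ y := rpow_lt_rpow_of_exponent_lt one_lt_two hxy
  have hKL : 0 < K * log 2 := mul_pos hK (log_pos one_lt_two)
  dsimp only
  nlinarith

theorem sub_mul_exp_eq_exp_log_sub (K a : ℝ) {x : ℝ} (hx : a < x) :
    (x - a) * exp (-K * ((2 : ℝ) ^ x - 1)) = exp (log (x - a) - K * ((2 : ℝ) ^ x - 1)) := by
  rw [exp_sub, exp_log (sub_pos.mpr hx), neg_mul, exp_neg, div_eq_mul_inv]

/-- Theorem 2 (optimality): with `f(x) = (x - a)·exp(-K·(2^x - 1))` and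
`x* > a` satisfying `(ln 2)·K·2^{x*}·(x* - a) = 1`, the function `f` attains
its strict global maximum on `(a, ∞)` at `x*`. -/
theorem throughput_strict_max_OFT (K a xstar : ℝ) (hK : 0 < K) (hxstar : a < xstar)
    (hstat : Real.log 2 * K * (2 : ℝ) ^ xstar * (xstar - a) = 1) :
    ∀ x : ℝ, a < x → x ≠ xstar →
      (x - a) * Real.exp (-K * ((2 : ℝ) ^ x - 1)) <
        (xstar - a) * Real.exp (-K * ((2 : ℝ) ^ xstar - 1)) := by
  intro x hx hne
  have hstationary : (xstar - a)⁻¹ - K * log 2 * (2 : ℝ) ^ xstar = 0 := by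
    have hpos : 0 < xstar - a := sub_pos.mpr hxstar
    rw [sub_eq_zero]
    field_simp
    linarith
  rw [sub_mul_exp_eq_exp_log_sub K a hx, sub_mul_exp_eq_exp_log_sub K a hxstar, exp_lt_exp]
  exact lt_of_hasDerivAt_of_strictAntiOn_deriv hxstar
    (fun y hy => hasDerivAt_log_sub_sub_mul_two_rpow K a hy)
    (strictAntiOn_inv_sub_sub_mul_two_rpow hK a) hstationary hx hne
end

section
/- Let K > 0 and a ∈ ℝ, define f(x) = (x − a)·exp(−K·(2^x − 1)), and let x* > a satisfy (ln 2)·K·2^{x*}·(x* − a) = 1. Then f is strictly increasing on the interval (a, x*] and strictly decreasing on the interval [x*, ∞); in particular f is quasiconcave on (a, ∞). -/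
/-!
The derivative of `f x = (x - a) * exp (-K * (2 ^ x - 1))` is
`exp (-K * (2 ^ x - 1)) * (1 - log 2 * K * 2 ^ x * (x - a))`. On `x ≥ a` the term
`log 2 * K * 2 ^ x * (x - a)` is a product of a positive increasing factor and a nonnegative
increasing one, so it is strictly increasing and crosses `1` exactly at `x*`: `f' > 0` before
`x*` and `f' < 0` after it. A function that increases up to a point and decreases after it has
order-connected, hence convex, superlevel sets.
-/

open Real Set

theorem quasiconcaveOn_of_monotoneOn_of_antitoneOn {𝕜 E β : Type*} [Semiring 𝕜] [PartialOrder 𝕜]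
    [AddCommMonoid E] [LinearOrder E] [IsOrderedAddMonoid E] [Module 𝕜 E] [PosSMulMono 𝕜 E]
    [Preorder β] {s : Set E} {f : E → β} {c : E} (hs : s.OrdConnected)
    (hmono : MonotoneOn f (s ∩ Iic c)) (hanti : AntitoneOn f (s ∩ Ici c)) :
    QuasiconcaveOn 𝕜 s f := by
  intro r
  refine OrdConnected.convex ⟨fun x hx y hy z hz => ⟨hs.out hx.1 hy.1 hz, ?_⟩⟩
  have hzs : z ∈ s := hs.out hx.1 hy.1 hz
  rcases le_total z c with hzc | hcz
  · exact hx.2.trans (hmono ⟨hx.1, hz.1.trans hzc⟩ ⟨hzs, hzc⟩ hz.1)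
  · exact hy.2.trans (hanti ⟨hzs, hcz⟩ ⟨hy.1, hcz.trans hz.2⟩ hz.2)

section Throughput

variable {K a b : ℝ}

/-- The paper's throughput `U` without the factor `1 / N`, with the base `2` generalized to `b`. -/
noncomputable def throughput (K a b x : ℝ) : ℝ :=
  (x - a) * exp (-K * (b ^ x - 1))

theorem hasDerivAt_throughput (hb : 0 < b) (x : ℝ) :
    HasDerivAt (throughput K a b)
      (exp (-K * (b ^ x - 1)) * (1 - log b * K * b ^ x * (x - a))) x := by
  have hexp : HasDerivAt (fun x => exp (-K * (b ^ x - 1)))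
      (exp (-K * (b ^ x - 1)) * (-K * (b ^ x * log b))) x :=
    ((((hasStrictDerivAt_const_rpow hb x).hasDerivAt).sub_const 1).const_mul (-K)).exp
  exact (((hasDerivAt_id' x).sub_const a).mul hexp).congr_deriv (by ring)

theorem continuous_throughput (hb : 0 < b) : Continuous (throughput K a b) :=
  continuous_iff_continuousAt.mpr fun x => (hasDerivAt_throughput hb x).continuousAt

theorem strictMonoOn_log_mul_mul_rpow_mul_sub (hK : 0 < K) (hb : 1 < b) :
    StrictMonoOn (fun x => log b * K * b ^ x * (x - a)) (Ici a) := by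
  intro x hx y _ hxy
  have hC : 0 < log b * K := mul_pos (log_pos hb) hK
  have hbx : 0 < b ^ x := rpow_pos_of_pos (by linarith) x
  have hbxy : b ^ x < b ^ y := rpow_lt_rpow_of_exponent_lt hb hxy
  have hxa : 0 ≤ x - a := sub_nonneg.mpr hx
  calc log b * K * b ^ x * (x - a) ≤ log b * K * b ^ y * (x - a) := by gcongr
    _ < log b * K * b ^ y * (y - a) := by gcongr

variable {xstar : ℝ}

theorem strictMonoOn_throughput (hK : 0 < K) (hb : 1 < b) (hxstar : a < xstar)
    (hstat : log b * K * b ^ xstar * (xstar - a) = 1) :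
    StrictMonoOn (throughput K a b) (Ioc a xstar) := by
  refine strictMonoOn_of_deriv_pos (convex_Ioc a xstar)
    (continuous_throughput (by linarith)).continuousOn fun x hx => ?_
  rw [interior_Ioc] at hx
  have hlt := strictMonoOn_log_mul_mul_rpow_mul_sub hK hb (mem_Ici.mpr hx.1.le)
    (mem_Ici.mpr hxstar.le) hx.2
  rw [(hasDerivAt_throughput (by linarith) x).deriv]
  exact mul_pos (exp_pos _) (by linarith)

theorem strictAntiOn_throughput (hK : 0 < K) (hb : 1 < b) (hxstar : a < xstar)
    (hstat : log b * K * b ^ xstar * (xstar - a) = 1) :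
    StrictAntiOn (throughput K a b) (Ici xstar) := by
  refine strictAntiOn_of_deriv_neg (convex_Ici xstar)
    (continuous_throughput (by linarith)).continuousOn fun x hx => ?_
  rw [interior_Ici] at hx
  have hgt := strictMonoOn_log_mul_mul_rpow_mul_sub hK hb (mem_Ici.mpr hxstar.le)
    (mem_Ici.mpr (hxstar.trans hx).le) hx
  rw [(hasDerivAt_throughput (by linarith) x).deriv]
  exact mul_neg_of_pos_of_neg (exp_pos _) (by linarith)

end Throughput

/-- Quasi-concavity claim of Theorem 2: with `f(x) = (x - a)·exp(-K·(2^x - 1))`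
and `x* > a` satisfying `(ln 2)·K·2^{x*}·(x* - a) = 1`, `f` is strictly
increasing on `(a, x*]`, strictly decreasing on `[x*, ∞)`, and in particular
quasiconcave on `(a, ∞)`. -/
theorem throughput_quasiconcave_OFT (K a xstar : ℝ) (hK : 0 < K) (hxstar : a < xstar)
    (hstat : Real.log 2 * K * (2 : ℝ) ^ xstar * (xstar - a) = 1) :
    StrictMonoOn (fun x : ℝ => (x - a) * Real.exp (-K * ((2 : ℝ) ^ x - 1)))
        (Set.Ioc a xstar) ∧
    StrictAntiOn (fun x : ℝ => (x - a) * Real.exp (-K * ((2 : ℝ) ^ x - 1)))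
        (Set.Ici xstar) ∧
    QuasiconcaveOn ℝ (Set.Ioi a)
        (fun x : ℝ => (x - a) * Real.exp (-K * ((2 : ℝ) ^ x - 1))) := by
  have hmono := strictMonoOn_throughput hK one_lt_two hxstar hstat
  have hanti := strictAntiOn_throughput hK one_lt_two hxstar hstat
  refine ⟨hmono, hanti, quasiconcaveOn_of_monotoneOn_of_antitoneOn ordConnected_Ioi
    (c := xstar) ?_ (hanti.antitoneOn.mono inter_subset_right)⟩
  rw [Ioi_inter_Iic]
  exact hmono.monotoneOn
end

section
/- Let a₁ ≤ a₂ be reals and K₁ ≥ K₂ > 0 be reals with (a₁, K₁) ≠ (a₂, K₂). If w₁ > 0 and w₂ > 0 satisfy w₁·e^{w₁} = 2^{−a₁}/K₁ and w₂·e^{w₂} = 2^{−a₂}/K₂, then a₁ + w₁/ln 2 < a₂ + w₂/ln 2. -/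
/-!
Writing `w e^w = 2^{-a}/K` as `K w · e^w = 2^{-a}` and taking logarithms gives
`a ln 2 + w = -ln (K w)`, so the rate `a + w / ln 2` can be read off either side.
If it did not increase, the left side would force `w₂ ≤ w₁`, hence `K₂ w₂ ≤ K₁ w₁`, while the
right side forces `K₁ w₁ ≤ K₂ w₂`; equality of these products of ordered positive factors
gives `K₁ = K₂`, `w₁ = w₂` and then `a₁ = a₂`.
-/

open Real

theorem mul_log_add_eq_neg_log_mul {a b K w : ℝ} (hb : 0 < b) (hK : 0 < K) (hw : 0 < w)
    (h : w * exp w = b ^ (-a) / K) : a * log b + w = -log (K * w) := by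
  have hprod : K * w * exp w = b ^ (-a) := by
    rw [mul_assoc, h, mul_div_cancel₀ _ hK.ne']
  have hlog := congrArg log hprod
  rw [log_mul (mul_pos hK hw).ne' (exp_pos w).ne', log_exp, log_rpow hb] at hlog
  linarith

theorem mul_add_lt_of_eq_neg_log_mul {a₁ a₂ K₁ K₂ w₁ w₂ c : ℝ} (hc : 0 < c) (ha : a₁ ≤ a₂)
    (hK₂ : 0 < K₂) (hK : K₂ ≤ K₁) (hne : (a₁, K₁) ≠ (a₂, K₂)) (hw₁ : 0 < w₁) (hw₂ : 0 < w₂)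
    (h₁ : a₁ * c + w₁ = -log (K₁ * w₁)) (h₂ : a₂ * c + w₂ = -log (K₂ * w₂)) :
    a₁ * c + w₁ < a₂ * c + w₂ := by
  by_contra! hle
  have hK₁ : 0 < K₁ := hK₂.trans_le hK
  have hac : a₁ * c ≤ a₂ * c := mul_le_mul_of_nonneg_right ha hc.le
  have hw : w₂ ≤ w₁ := by linarith
  have hprod_le : K₂ * w₂ ≤ K₁ * w₁ := mul_le_mul hK hw hw₂.le hK₁.le
  have hprod_ge : K₁ * w₁ ≤ K₂ * w₂ :=
    (log_le_log_iff (mul_pos hK₁ hw₁) (mul_pos hK₂ hw₂)).1 (by linarith)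
  obtain ⟨rfl, rfl⟩ :=
    (mul_eq_mul_iff_eq_and_eq_of_pos hK hw hK₂ hw₁).1 (le_antisymm hprod_le hprod_ge)
  have ha' : a₂ ≤ a₁ := le_of_mul_le_mul_right (by linarith) hc
  exact hne (by rw [le_antisymm ha ha'])

/-- Monotonicity step in the proof of Corollary 2: if `a₁ ≤ a₂`,
`K₁ ≥ K₂ > 0` with `(a₁, K₁) ≠ (a₂, K₂)`, and `w₁, w₂ > 0` satisfy
`w₁·e^{w₁} = 2^{-a₁}/K₁` and `w₂·e^{w₂} = 2^{-a₂}/K₂`, then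
`a₁ + w₁/ln 2 < a₂ + w₂/ln 2`. -/
theorem optimal_rate_strict_mono (a₁ a₂ K₁ K₂ w₁ w₂ : ℝ)
    (ha : a₁ ≤ a₂) (hK₂ : 0 < K₂) (hK : K₂ ≤ K₁)
    (hne : (a₁, K₁) ≠ (a₂, K₂)) (hw₁ : 0 < w₁) (hw₂ : 0 < w₂)
    (hl₁ : w₁ * Real.exp w₁ = (2 : ℝ) ^ (-a₁) / K₁)
    (hl₂ : w₂ * Real.exp w₂ = (2 : ℝ) ^ (-a₂) / K₂) :
    a₁ + w₁ / Real.log 2 < a₂ + w₂ / Real.log 2 := by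
  have hlog2 : 0 < log 2 := log_pos one_lt_two
  have key := mul_add_lt_of_eq_neg_log_mul hlog2 ha hK₂ hK hne hw₁ hw₂
    (mul_log_add_eq_neg_log_mul two_pos (hK₂.trans_le hK) hw₁ hl₁)
    (mul_log_add_eq_neg_log_mul two_pos hK₂ hw₂ hl₂)
  have := div_lt_div_of_pos_right key hlog2
  rwa [add_div, add_div, mul_div_cancel_right₀ _ hlog2.ne',
    mul_div_cancel_right₀ _ hlog2.ne'] at this
end

section
/- Fix reals p > 0, L > 0, K₁ > 0, B > 0 and α ≥ 2. For each real N ≥ 1 define: w(N) > 0 by w(N)·e^{w(N)} = (α/2)·(B/(N·K₁))^{−α/2}; R_e(N) = log₂(1 + (2p/α)·w(N)); K₂(N) = ((L/N)^α + 1)/p; s(N) > 0 by s(N)·e^{s(N)} = 2^{−R_e(N)}/K₂(N); and R_t*(N) = R_e(N) + s(N)/ln 2. Then R_t* is strictly increasing in N: for all 1 ≤ N₁ < N₂, R_t*(N₁) < R_t*(N₂). -/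
/-!
With `x = 2^{R_e} = 1 + (2p/α) w`, the equation for `s` reads `s · e^{ln x + s} = 1 / K₂`, and
`R_t* · ln 2 = ln x + s`. As `N` grows, `w` (hence `ln x`) does not decrease, because `w ↦ w e^w`
is increasing, while `1 / K₂` strictly increases. Since `s · e^{a + s}` is increasing both in
`s ≥ 0` and in `a`, this forces `ln x + s` to increase strictly.
-/

open Real

namespace Real

theorem le_of_mul_exp_le_mul_exp {a b : ℝ} (hb : 0 ≤ b) (h : a * exp a ≤ b * exp b) :
    a ≤ b := by
  by_contra! hba
  exact h.not_gt (mul_lt_mul hba (exp_lt_exp.2 hba).le (exp_pos b) (hb.trans hba.le))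

theorem add_lt_add_of_mul_exp_add_lt {a a' s s' : ℝ} (ha : a ≤ a') (hs' : 0 ≤ s')
    (h : s * exp (a + s) < s' * exp (a' + s')) : a + s < a' + s' := by
  by_contra! hle
  have hss' : s < s' := by
    refine lt_of_mul_lt_mul_right (h.trans_le ?_) (exp_pos (a + s)).le
    exact mul_le_mul_of_nonneg_left (exp_le_exp.2 hle) hs'
  linarith

theorem mul_exp_log_add_eq_inv_of_mul_exp_eq {b x s K : ℝ} (hb : 0 < b) (hb₁ : b ≠ 1)
    (hx : 0 < x) (h : s * exp s = b ^ (-logb b x) / K) : s * exp (log x + s) = K⁻¹ := by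
  rw [rpow_neg hb.le, rpow_logb hb hb₁ hx] at h
  rw [exp_add, exp_log hx, mul_left_comm, h]
  field_simp

end Real

/-- Corollary 2 (first part, OFT scheme): the optimal codeword rate
`R_t*(N) = R_e(N) + s(N)/ln 2` is strictly increasing in the hop-count `N`,
where `w(N)·e^{w(N)} = (α/2)·(B/(N·K₁))^{-α/2}`, `R_e(N) = log₂(1 + (2p/α)·w(N))`,
`K₂(N) = ((L/N)^α + 1)/p` and `s(N)·e^{s(N)} = 2^{-R_e(N)}/K₂(N)`. -/
theorem optimal_Rt_increasing_in_hops (p L K₁ B α : ℝ)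
    (hp : 0 < p) (hL : 0 < L) (hK₁ : 0 < K₁) (hB : 0 < B) (hα : 2 ≤ α)
    (w Re K₂ s Rt : ℝ → ℝ)
    (hwpos : ∀ N : ℝ, 1 ≤ N → 0 < w N)
    (hw : ∀ N : ℝ, 1 ≤ N →
      w N * Real.exp (w N) = (α / 2) * (B / (N * K₁)) ^ (-(α / 2)))
    (hRe : ∀ N : ℝ, 1 ≤ N → Re N = Real.logb 2 (1 + (2 * p / α) * w N))
    (hK₂ : ∀ N : ℝ, 1 ≤ N → K₂ N = ((L / N) ^ α + 1) / p)
    (hspos : ∀ N : ℝ, 1 ≤ N → 0 < s N)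
    (hs : ∀ N : ℝ, 1 ≤ N → s N * Real.exp (s N) = (2 : ℝ) ^ (-(Re N)) / K₂ N)
    (hRt : ∀ N : ℝ, 1 ≤ N → Rt N = Re N + s N / Real.log 2) :
    ∀ N₁ N₂ : ℝ, 1 ≤ N₁ → N₁ < N₂ → Rt N₁ < Rt N₂ := by
  intro N₁ N₂ hN₁ hN₁₂
  have hN₂ : 1 ≤ N₂ := hN₁.trans hN₁₂.le
  have hα₀ : 0 < α := by linarith
  have hw_le : w N₁ ≤ w N₂ := by
    refine le_of_mul_exp_le_mul_exp (hwpos N₂ hN₂).le ?_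
    rw [hw N₁ hN₁, hw N₂ hN₂]
    refine mul_le_mul_of_nonneg_left (rpow_le_rpow_of_nonpos (by positivity) ?_ (by linarith))
      (by positivity)
    gcongr
  have hK₂_lt : K₂ N₂ < K₂ N₁ := by
    rw [hK₂ N₁ hN₁, hK₂ N₂ hN₂]
    gcongr
  have hK₂_pos : 0 < K₂ N₂ := by rw [hK₂ N₂ hN₂]; positivity
  have hx : ∀ N, 1 ≤ N → 0 < 1 + 2 * p / α * w N := fun N hN ↦ by
    have := hwpos N hN
    positivity
  have hs_shift : ∀ N, 1 ≤ N → s N * exp (log (1 + 2 * p / α * w N) + s N) = (K₂ N)⁻¹ :=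
    fun N hN ↦ mul_exp_log_add_eq_inv_of_mul_exp_eq two_pos (by norm_num) (hx N hN)
      (hRe N hN ▸ hs N hN)
  have hsum : log (1 + 2 * p / α * w N₁) + s N₁ < log (1 + 2 * p / α * w N₂) + s N₂ := by
    refine add_lt_add_of_mul_exp_add_lt (log_le_log (hx N₁ hN₁) ?_) (hspos N₂ hN₂).le ?_
    · gcongr
    · rw [hs_shift N₁ hN₁, hs_shift N₂ hN₂]
      exact inv_strictAnti₀ hK₂_pos hK₂_lt
  rw [hRt N₁ hN₁, hRt N₂ hN₂, hRe N₁ hN₁, hRe N₂ hN₂, logb, logb, ← add_div, ← add_div]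
  exact div_lt_div_of_pos_right hsum (log_pos one_lt_two)
end

section
/- Fix reals p > 0, L > 0, K₁ > 0, B > 0 and α ≥ 2. For each positive integer N define: w(N) > 0 by w(N)·e^{w(N)} = (α/2)·(B/(N·K₁))^{−α/2}; R_e(N) = log₂(1 + (2p/α)·w(N)); K₂(N) = ((L/N)^α + 1)/p; and s(N) > 0 by s(N)·e^{s(N)} = 2^{−R_e(N)}/K₂(N). Then s(N) → 0 as N → ∞; equivalently, the optimal confidential-information rate R_s*(N) = s(N)/ln 2 tends to 0 as the number of hops grows to infinity. -/
/-! The equation for `w(N)` has right-hand side `(α/2)·(N·K₁/B)^{α/2} → ∞`, so `w(N) → ∞`, hence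
`2^{-R_e(N)} = 1/(1 + (2p/α)·w(N)) → 0`, while `K₂(N) → 1/p`. Thus `s(N)·e^{s(N)} → 0`, and since this
quantity is positive, `0 < s(N) ≤ s(N)·e^{s(N)}` squeezes `s(N)` to `0`. -/

open Filter Topology Real

namespace Filter.Tendsto

variable {ι : Type*} {l : Filter ι} {f : ι → ℝ}

theorem atTop_of_mul_exp (h : Tendsto (fun i => f i * Real.exp (f i)) l atTop) :
    Tendsto f l atTop := by
  have hle : ∀ x : ℝ, x * Real.exp x ≤ Real.exp (2 * x) := fun x => by
    rw [two_mul, Real.exp_add]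
    exact mul_le_mul_of_nonneg_right ((le_add_of_nonneg_right zero_le_one).trans (add_one_le_exp x))
      (exp_pos x).le
  exact (tendsto_const_mul_atTop_of_pos two_pos).mp
    (tendsto_exp_comp_atTop.mp (tendsto_atTop_mono (fun i => hle (f i)) h))

theorem zero_of_mul_exp (hpos : ∀ᶠ i in l, 0 < f i * Real.exp (f i))
    (h : Tendsto (fun i => f i * Real.exp (f i)) l (𝓝 0)) : Tendsto f l (𝓝 0) := by
  refine tendsto_of_tendsto_of_tendsto_of_le_of_le' tendsto_const_nhds h ?_ ?_
  · filter_upwards [hpos] with i hi using (pos_of_mul_pos_left hi (exp_pos _).le).le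
  · filter_upwards [hpos] with i hi
    have hfi := pos_of_mul_pos_left hi (exp_pos _).le
    exact le_mul_of_one_le_right hfi.le (one_le_exp hfi.le)

end Filter.Tendsto

theorem tendsto_div_natCast_mul_rpow_neg_atTop {B K r : ℝ} (hB : 0 < B) (hK : 0 < K) (hr : 0 < r) :
    Tendsto (fun N : ℕ => (B / (N * K)) ^ (-r)) atTop atTop := by
  have hden : Tendsto (fun N : ℕ => (N : ℝ) * K) atTop atTop :=
    tendsto_natCast_atTop_atTop.atTop_mul_const hK
  have hquot : Tendsto (fun N : ℕ => B / (N * K)) atTop (𝓝[>] 0) :=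
    tendsto_nhdsWithin_of_tendsto_nhds_of_eventually_within _ (hden.const_div_atTop B)
      (by filter_upwards [hden.eventually_gt_atTop 0] with N hN using div_pos hB hN)
  exact (tendsto_rpow_neg_nhdsGT_zero (neg_lt_zero.mpr hr)).comp hquot

theorem tendsto_div_natCast_rpow_zero (L : ℝ) {α : ℝ} (hα : 0 < α) :
    Tendsto (fun N : ℕ => (L / N) ^ α) atTop (𝓝 0) := by
  have h := ((continuousAt_rpow_const 0 α (Or.inr hα.le)).tendsto).comp
    (tendsto_const_div_atTop_nhds_zero_nat L)
  rwa [zero_rpow hα.ne'] at h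

theorem tendsto_two_rpow_neg_logb_atTop {ι : Type*} {l : Filter ι} {g : ι → ℝ}
    (hg : Tendsto g l atTop) : Tendsto (fun i => (2 : ℝ) ^ (-logb 2 (g i))) l (𝓝 0) := by
  refine (tendsto_inv_atTop_zero.comp hg).congr' ?_
  filter_upwards [hg.eventually_gt_atTop 0] with i hi
  rw [Function.comp_apply, rpow_neg zero_le_two, rpow_logb two_pos (by norm_num) hi]

theorem optimal_Rs_tendsto_zero_general (p L K₁ B α : ℝ)
    (hp : 0 < p) (hK₁ : 0 < K₁) (hB : 0 < B) (hα : 2 ≤ α)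
    (w Re K₂ s : ℕ → ℝ)
    (hw : ∀ N : ℕ, 1 ≤ N →
      w N * Real.exp (w N) = (α / 2) * (B / ((N : ℝ) * K₁)) ^ (-(α / 2)))
    (hRe : ∀ N : ℕ, 1 ≤ N → Re N = Real.logb 2 (1 + (2 * p / α) * w N))
    (hK₂ : ∀ N : ℕ, 1 ≤ N → K₂ N = ((L / (N : ℝ)) ^ α + 1) / p)
    (hs : ∀ N : ℕ, 1 ≤ N → s N * Real.exp (s N) = (2 : ℝ) ^ (-(Re N)) / K₂ N) :
    Filter.Tendsto s Filter.atTop (nhds 0) := by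
  have hα₀ : 0 < α := by linarith
  have hw_top : Tendsto w atTop atTop := by
    refine Tendsto.atTop_of_mul_exp (Tendsto.congr' ?_ ((tendsto_div_natCast_mul_rpow_neg_atTop
      hB hK₁ (half_pos hα₀)).const_mul_atTop (half_pos hα₀)))
    filter_upwards [eventually_ge_atTop 1] with N hN using (hw N hN).symm
  have hsnr_top : Tendsto (fun N => 1 + 2 * p / α * w N) atTop atTop :=
    tendsto_atTop_add_const_left _ 1 (hw_top.const_mul_atTop (by positivity))
  have hpow_lim : Tendsto (fun N => (2 : ℝ) ^ (-Re N)) atTop (𝓝 0) := by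
    refine (tendsto_two_rpow_neg_logb_atTop hsnr_top).congr' ?_
    filter_upwards [eventually_ge_atTop 1] with N hN
    rw [hRe N hN]
  have hK₂_lim : Tendsto K₂ atTop (𝓝 ((0 + 1) / p)) := by
    refine Tendsto.congr' ?_ (((tendsto_div_natCast_rpow_zero L hα₀).add_const 1).div_const p)
    filter_upwards [eventually_ge_atTop 1] with N hN using (hK₂ N hN).symm
  have hs_eq : (fun N => (2 : ℝ) ^ (-Re N) / K₂ N) =ᶠ[atTop] fun N => s N * exp (s N) := by
    filter_upwards [eventually_ge_atTop 1] with N hN using (hs N hN).symm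
  refine Tendsto.zero_of_mul_exp ?_ ?_
  · filter_upwards [hs_eq, hK₂_lim.eventually (lt_mem_nhds (by positivity))] with N hN hK
    exact hN ▸ div_pos (rpow_pos_of_pos two_pos _) hK
  · simpa only [zero_div] using (hpow_lim.div hK₂_lim (by positivity)).congr' hs_eq

/-- Corollary 2 (second part, OFT scheme): the optimal confidential-information
rate `R_s*(N) = s(N)/ln 2` tends to `0` as the number of hops `N → ∞`, where
`w(N)·e^{w(N)} = (α/2)·(B/(N·K₁))^{-α/2}`, `R_e(N) = log₂(1 + (2p/α)·w(N))`,
`K₂(N) = ((L/N)^α + 1)/p` and `s(N)·e^{s(N)} = 2^{-R_e(N)}/K₂(N)`. -/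
theorem optimal_Rs_tendsto_zero (p L K₁ B α : ℝ)
    (hp : 0 < p) (hL : 0 < L) (hK₁ : 0 < K₁) (hB : 0 < B) (hα : 2 ≤ α)
    (w Re K₂ s : ℕ → ℝ)
    (hwpos : ∀ N : ℕ, 1 ≤ N → 0 < w N)
    (hw : ∀ N : ℕ, 1 ≤ N →
      w N * Real.exp (w N) = (α / 2) * (B / ((N : ℝ) * K₁)) ^ (-(α / 2)))
    (hRe : ∀ N : ℕ, 1 ≤ N → Re N = Real.logb 2 (1 + (2 * p / α) * w N))
    (hK₂ : ∀ N : ℕ, 1 ≤ N → K₂ N = ((L / (N : ℝ)) ^ α + 1) / p)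
    (hspos : ∀ N : ℕ, 1 ≤ N → 0 < s N)
    (hs : ∀ N : ℕ, 1 ≤ N → s N * Real.exp (s N) = (2 : ℝ) ^ (-(Re N)) / K₂ N) :
    Filter.Tendsto s Filter.atTop (nhds 0) :=
  optimal_Rs_tendsto_zero_general p L K₁ B α hp hK₁ hB hα w Re K₂ s hw hRe hK₂ hs
end

section
/- Let E > 0, F > 0 and N ≥ 1 be fixed reals. For each p > 0 let s(p) > 0 satisfy s(p)·e^{s(p)} = p/(E·(F·p + 1)), let s∞ > 0 satisfy s∞·e^{s∞} = 1/(E·F), and define U(p) = (s(p)/(N·ln 2))·exp(−(E/p)·((1 + F·p)·e^{s(p)} − 1)). Then U(p) → (s∞/(N·ln 2))·exp(−E·F·e^{s∞}) as p → ∞. -/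
/-!
Since `x ↦ x e^x` is strictly increasing on `[0, ∞)` and `s(p) e^{s(p)} = p / (E (F p + 1)) → 1 / (E F)
= s∞ e^{s∞}`, the roots converge: `s(p) → s∞`. The exponent equals
`-E F e^{s(p)} - (E / p) (e^{s(p)} - 1)`, which tends to `-E F e^{s∞}`.
-/

open Filter Topology Set

theorem StrictMonoOn.tendsto_of_tendsto_comp_Ici {α β γ : Type*} [LinearOrder α]
    [TopologicalSpace α] [OrderTopology α] [LinearOrder β] [TopologicalSpace β] [OrderTopology β]
    {f : α → β} {a c : α} (hf : StrictMonoOn f (Ici a)) (hc : a ≤ c) {l : Filter γ}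
    {u : γ → α} (hu : ∀ᶠ x in l, a ≤ u x) (h : Tendsto (f ∘ u) l (𝓝 (f c))) :
    Tendsto u l (𝓝 c) := by
  rw [tendsto_order]
  constructor
  · intro b hbc
    rcases lt_or_ge b a with hba | hab
    · exact hu.mono fun x hx => hba.trans_le hx
    · filter_upwards [hu, (tendsto_order.1 h).1 _ (hf hab hc hbc)] with x hx hfx
      exact (hf.lt_iff_lt hab hx).1 hfx
  · intro b hcb
    have hab : a ≤ b := hc.trans hcb.le
    filter_upwards [hu, (tendsto_order.1 h).2 _ (hf hc hab hcb)] with x hx hfx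
    exact (hf.lt_iff_lt hx hab).1 hfx

theorem Real.strictMonoOn_mul_exp : StrictMonoOn (fun x => x * Real.exp x) (Ici 0) :=
  fun x hx _ _ hxy => mul_lt_mul hxy (Real.exp_le_exp.2 hxy.le) (Real.exp_pos x) (hx.out.trans hxy.le)

theorem tendsto_div_mul_add_atTop {a : ℝ} (ha : a ≠ 0) (b : ℝ) :
    Tendsto (fun x => x / (a * x + b)) atTop (𝓝 a⁻¹) := by
  have hlim : Tendsto (fun x => a + b * x⁻¹) atTop (𝓝 a) := by
    simpa using tendsto_const_nhds.add (tendsto_inv_atTop_zero.const_mul b)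
  refine (hlim.inv₀ ha).congr' ?_
  filter_upwards [eventually_ne_atTop 0] with x hx
  field_simp

theorem tendsto_div_mul_one_add_mul_sub_one (E F : ℝ) {v : ℝ → ℝ} {L : ℝ}
    (hv : Tendsto v atTop (𝓝 L)) :
    Tendsto (fun p => E / p * ((1 + F * p) * v p - 1)) atTop (𝓝 (E * F * L)) := by
  have hlim : Tendsto (fun p => E * F * v p + E / p * (v p - 1)) atTop (𝓝 (E * F * L)) := by
    simpa using (hv.const_mul (E * F)).add
      ((tendsto_const_nhds.div_atTop tendsto_id).mul (hv.sub_const 1))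
  refine hlim.congr' ?_
  filter_upwards [eventually_ne_atTop 0] with p hp
  field_simp
  ring

theorem throughput_high_SNR_limit_general (E F N : ℝ) (hE : 0 < E) (hF : 0 < F)
    (s : ℝ → ℝ) (sInfty : ℝ)
    (hspos : ∀ p : ℝ, 0 < p → 0 < s p)
    (hs : ∀ p : ℝ, 0 < p → s p * Real.exp (s p) = p / (E * (F * p + 1)))
    (hsInftyPos : 0 < sInfty)
    (hsInfty : sInfty * Real.exp sInfty = 1 / (E * F)) :
    Filter.Tendsto
      (fun p : ℝ => (s p / (N * Real.log 2)) *
        Real.exp (-(E / p) * ((1 + F * p) * Real.exp (s p) - 1)))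
      Filter.atTop
      (nhds ((sInfty / (N * Real.log 2)) *
        Real.exp (-(E * F * Real.exp sInfty)))) := by
  have hroot : Tendsto (fun p => s p * Real.exp (s p)) atTop (𝓝 (sInfty * Real.exp sInfty)) := by
    rw [hsInfty, one_div]
    refine (tendsto_div_mul_add_atTop (mul_pos hE hF).ne' E).congr' ?_
    filter_upwards [eventually_gt_atTop 0] with p hp
    rw [hs p hp]
    ring
  have hS : Tendsto s atTop (𝓝 sInfty) :=
    Real.strictMonoOn_mul_exp.tendsto_of_tendsto_comp_Ici hsInftyPos.le
      ((eventually_gt_atTop 0).mono fun p hp => (hspos p hp).le) hroot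
  have hexponent := (tendsto_div_mul_one_add_mul_sub_one E F hS.rexp).neg
  simpa only [neg_mul] using (hS.div_const _).mul hexponent.rexp

/-- Throughput limit of Corollary 3 (OFT scheme): with `s(p) > 0` satisfying
`s(p)·e^{s(p)} = p/(E·(F·p + 1))`, `sInfty > 0` satisfying
`sInfty·e^{sInfty} = 1/(E·F)`, and
`U(p) = (s(p)/(N·ln 2))·exp(-(E/p)·((1 + F·p)·e^{s(p)} - 1))`, one has
`U(p) → (sInfty/(N·ln 2))·exp(-E·F·e^{sInfty})` as `p → ∞`. -/
theorem throughput_high_SNR_limit (E F N : ℝ) (hE : 0 < E) (hF : 0 < F)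
    (hN : 1 ≤ N) (s : ℝ → ℝ) (sInfty : ℝ)
    (hspos : ∀ p : ℝ, 0 < p → 0 < s p)
    (hs : ∀ p : ℝ, 0 < p → s p * Real.exp (s p) = p / (E * (F * p + 1)))
    (hsInftyPos : 0 < sInfty)
    (hsInfty : sInfty * Real.exp sInfty = 1 / (E * F)) :
    Filter.Tendsto
      (fun p : ℝ => (s p / (N * Real.log 2)) *
        Real.exp (-(E / p) * ((1 + F * p) * Real.exp (s p) - 1)))
      Filter.atTop
      (nhds ((sInfty / (N * Real.log 2)) *
        Real.exp (-(E * F * Real.exp sInfty)))) :=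
  throughput_high_SNR_limit_general E F N hE hF s sInfty hspos hs hsInftyPos hsInfty
end

section
/- Let N ≥ 1, L > 0, p > 0 and α > 0 be reals, let a ∈ ℝ, set K₄ = N·((L/N)^α + 1)/p, and define f(x) = (x − a)·exp(−K₄·(2^x − 1)). If w > 0 satisfies w·e^w = 2^{−a}/K₄, then x* = a + w/ln 2 satisfies x* > a and (ln 2)·K₄·2^{x*}·(x* − a) = 1, and for every x > a with x ≠ x*, f(x) < f(x*); that is, f attains its strict global maximum on (a, ∞) at x*. -/
/-!
Write `s = x - a`, `t = w / log 2` and `E = 2 ^ (a + t)`. Since `2 ^ (a + t) = 2 ^ a * e ^ w`, the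
Lambert equation is exactly the stationarity condition `log 2 * K₄ * E * t = 1`. Comparing
logarithms of the two sides, strict concavity of `log` gives `log s - log t < s / t - 1`, and
`s / t - 1 = log 2 * K₄ * E * (s - t) ≤ K₄ * (2 ^ x - E)` by convexity of `2 ^ x` (tangent line at
`a + t`).
-/

open Real

lemma log_lt_log_add_div_sub_one {s t : ℝ} (hs : 0 < s) (ht : 0 < t) (hst : s ≠ t) :
    log s < log t + (s / t - 1) := by
  have h := log_lt_sub_one_of_pos (div_pos hs ht) (by rwa [ne_eq, div_eq_one_iff_eq ht.ne'])
  rw [log_div hs.ne' ht.ne'] at h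
  linarith

lemma rpow_mul_one_add_log_mul_sub_le {b : ℝ} (hb : 0 < b) (u y : ℝ) :
    b ^ u * (1 + log b * (y - u)) ≤ b ^ y := by
  have hsplit : b ^ y = b ^ u * exp (log b * (y - u)) := by
    rw [← rpow_def_of_pos hb, ← rpow_add hb, add_sub_cancel]
  rw [hsplit]
  gcongr
  linarith [add_one_le_exp (log b * (y - u))]

lemma log_mul_mul_rpow_add_div_log_mul_div_log_eq_one {K b a w : ℝ} (hK : K ≠ 0) (hb : 0 < b)
    (hb1 : b ≠ 1) (hLambert : w * exp w = b ^ (-a) / K) :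
    log b * K * b ^ (a + w / log b) * (w / log b) = 1 := by
  have hlog : log b ≠ 0 := log_ne_zero_of_pos_of_ne_one hb hb1
  have hpow : b ^ (a + w / log b) = b ^ a * exp w := by
    rw [rpow_add hb, rpow_def_of_pos hb (w / log b), mul_div_cancel₀ w hlog]
  calc log b * K * b ^ (a + w / log b) * (w / log b)
      = K * b ^ a * (w * exp w) := by rw [hpow]; field_simp
    _ = b ^ a * b ^ (-a) := by rw [hLambert]; field_simp
    _ = 1 := by rw [← rpow_add hb, add_neg_cancel, rpow_zero]

theorem sub_mul_exp_neg_mul_rpow_sub_one_lt {K b a t x : ℝ} (hK : 0 ≤ K) (hb : 0 < b)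
    (ht : 0 < t) (hstat : log b * K * b ^ (a + t) * t = 1) (hx : a < x) (hxt : x ≠ a + t) :
    (x - a) * exp (-K * (b ^ x - 1)) < t * exp (-K * (b ^ (a + t) - 1)) := by
  set E := b ^ (a + t)
  have hs : 0 < x - a := sub_pos.mpr hx
  have hconcave : log (x - a) < log t + (x - a - t) * (log b * K * E) := by
    have hdiv : (x - a) / t - 1 = (x - a - t) * (log b * K * E) := by
      rw [eq_div_iff ht.ne' |>.mpr hstat, mul_one_div, div_sub_one ht.ne']
    rw [← hdiv]
    exact log_lt_log_add_div_sub_one hs ht (fun h => hxt (by linarith))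
  have hconvex : (x - a - t) * (log b * K * E) ≤ K * (b ^ x - E) := by
    have h := mul_le_mul_of_nonneg_left (rpow_mul_one_add_log_mul_sub_le hb (a + t) x) hK
    linarith
  calc (x - a) * exp (-K * (b ^ x - 1)) = exp (log (x - a) - K * (b ^ x - 1)) := by
        rw [exp_sub, exp_log hs, neg_mul, exp_neg, div_eq_mul_inv]
    _ < exp (log t - K * (E - 1)) := exp_lt_exp.mpr (by linarith)
    _ = t * exp (-K * (E - 1)) := by
        rw [exp_sub, exp_log ht, neg_mul, exp_neg, div_eq_mul_inv]

theorem throughput_strict_max_NOFT_general (N L p α a w : ℝ)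
    (hN : 1 ≤ N) (hL : 0 < L) (hp : 0 < p) (hw : 0 < w)
    (hLambert : w * Real.exp w = (2 : ℝ) ^ (-a) / (N * ((L / N) ^ α + 1) / p)) :
    a < a + w / Real.log 2 ∧
    Real.log 2 * (N * ((L / N) ^ α + 1) / p) *
        (2 : ℝ) ^ (a + w / Real.log 2) * ((a + w / Real.log 2) - a) = 1 ∧
    ∀ x : ℝ, a < x → x ≠ a + w / Real.log 2 →
      (x - a) * Real.exp (-(N * ((L / N) ^ α + 1) / p) * ((2 : ℝ) ^ x - 1)) <
        ((a + w / Real.log 2) - a) *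
          Real.exp (-(N * ((L / N) ^ α + 1) / p) *
            ((2 : ℝ) ^ (a + w / Real.log 2) - 1)) := by
  have hN0 : 0 < N := one_pos.trans_le hN
  have hK : 0 < N * ((L / N) ^ α + 1) / p := by positivity
  have ht : 0 < w / log 2 := div_pos hw (log_pos one_lt_two)
  have hstat := log_mul_mul_rpow_add_div_log_mul_div_log_eq_one hK.ne' two_pos
    (by norm_num) hLambert
  rw [add_sub_cancel_left]
  exact ⟨lt_add_of_pos_right a ht, hstat,
    fun x hx hxt => sub_mul_exp_neg_mul_rpow_sub_one_lt hK.le two_pos ht hstat hx hxt⟩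

/-- Theorem 3 (NOFT scheme): with `K₄ = N·((L/N)^α + 1)/p`,
`f(x) = (x - a)·exp(-K₄·(2^x - 1))`, and `w > 0` satisfying
`w·e^w = 2^{-a}/K₄`, the point `x* = a + w/ln 2` satisfies `x* > a` and
`(ln 2)·K₄·2^{x*}·(x* - a) = 1`, and `f` attains its strict global maximum on
`(a, ∞)` at `x*`. -/
theorem throughput_strict_max_NOFT (N L p α a w : ℝ)
    (hN : 1 ≤ N) (hL : 0 < L) (hp : 0 < p) (hα : 0 < α) (hw : 0 < w)
    (hLambert : w * Real.exp w = (2 : ℝ) ^ (-a) / (N * ((L / N) ^ α + 1) / p)) :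
    a < a + w / Real.log 2 ∧
    Real.log 2 * (N * ((L / N) ^ α + 1) / p) *
        (2 : ℝ) ^ (a + w / Real.log 2) * ((a + w / Real.log 2) - a) = 1 ∧
    ∀ x : ℝ, a < x → x ≠ a + w / Real.log 2 →
      (x - a) * Real.exp (-(N * ((L / N) ^ α + 1) / p) * ((2 : ℝ) ^ x - 1)) <
        ((a + w / Real.log 2) - a) *
          Real.exp (-(N * ((L / N) ^ α + 1) / p) *
            ((2 : ℝ) ^ (a + w / Real.log 2) - 1)) :=
  throughput_strict_max_NOFT_general N L p α a w hN hL hp hw hLambert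
end
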